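/- arXiv:math/0411090 — 4 statements merged into one kernel-verified Lean document; each statement's English description precedes it below -/
import Mathlib

section
/- For all natural numbers n and k with k ≤ n, the double sum ∑_{p=0}^{n} ∑_{ℓ=0}^{p} (−1)^{p·k+ℓ} · C(n−k, p−ℓ) · C(k, ℓ) (computed in ℤ, where C(a,b) denotes the binomial coefficient, which is 0 when b > a) equals 2^n if k = 0, equals 2^n if k = n and n is odd, and equals 0 in all other cases (i.e. when 1 ≤ k ≤ n−1, or when k = n with n even). -/
open Finset

theorem stone_weierstrass_lemma2 (n k : ℕ) (hk : k ≤ n) :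
    (∑ p ∈ Finset.range (n + 1), ∑ l ∈ Finset.range (p + 1),
        (-1 : ℤ) ^ (p * k + l) * (n - k).choose (p - l) * k.choose l) =
      if k = 0 then 2 ^ n
      else if k = n ∧ Odd n then 2 ^ n
      else 0 := by
  set m := n - k with hm
  set T : ℤ := ∑ j ∈ range (m + 1), ((-1 : ℤ) ^ k) ^ j * m.choose j with hT
  have step1 : (∑ p ∈ range (n + 1), ∑ l ∈ range (p + 1),
        (-1 : ℤ) ^ (p * k + l) * m.choose (p - l) * k.choose l)
      = ∑ l ∈ range (n + 1), ∑ p ∈ Ico l (n + 1),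
        (-1 : ℤ) ^ (p * k + l) * m.choose (p - l) * k.choose l := by
    apply Finset.sum_comm'
    intro p l
    simp only [Finset.mem_range, Finset.mem_Ico]
    omega
  have step2 : ∀ l ∈ range (n + 1),
      (∑ p ∈ Ico l (n + 1), (-1 : ℤ) ^ (p * k + l) * m.choose (p - l) * k.choose l)
      = ((-1 : ℤ) ^ (k + 1)) ^ l * k.choose l * T := by
    intro l hl
    rw [mem_range] at hl
    rw [Finset.sum_Ico_eq_sum_range]
    by_cases hlk : l ≤ k
    · have hrange : m + 1 ≤ n + 1 - l := by omega
      have htrunc : ∑ j ∈ range (n + 1 - l),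
            (-1 : ℤ) ^ ((l + j) * k + l) * m.choose (l + j - l) * k.choose l
          = ∑ j ∈ range (m + 1),
            (-1 : ℤ) ^ ((l + j) * k + l) * m.choose (l + j - l) * k.choose l := by
        rw [← Finset.sum_subset (Finset.range_subset_range.2 hrange)]
        intro j hj hj2
        rw [mem_range] at hj hj2
        have h1 : l + j - l = j := by omega
        simp [h1, Nat.choose_eq_zero_of_lt (show m < j by omega)]
      rw [htrunc, hT, Finset.mul_sum]
      apply Finset.sum_congr rfl
      intro j _
      have h2 : l + j - l = j := by omega
      have h3 : (l + j) * k + l = l * (k + 1) + j * k := by ring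
      rw [h2, h3, pow_add, pow_mul, pow_mul]
      ring
    · push_neg at hlk
      simp [Nat.choose_eq_zero_of_lt hlk]
  rw [step1, Finset.sum_congr rfl step2, ← Finset.sum_mul]
  have step3 : (∑ l ∈ range (n + 1), ((-1 : ℤ) ^ (k + 1)) ^ l * k.choose l)
      = ∑ l ∈ range (k + 1), ((-1 : ℤ) ^ (k + 1)) ^ l * k.choose l := by
    rw [← Finset.sum_subset (Finset.range_subset_range.2 (by omega : k + 1 ≤ n + 1))]
    intro l hl hl2
    rw [mem_range] at hl hl2
    have : k < l := by omega
    simp [Nat.choose_eq_zero_of_lt this]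
  rw [step3]
  rcases Nat.even_or_odd k with hke | hko
  · -- k even
    have h1 : ((-1 : ℤ) ^ (k + 1)) = -1 := Odd.neg_one_pow (Even.add_one hke)
    have h2 : ((-1 : ℤ) ^ k) = 1 := Even.neg_one_pow hke
    have hTval : T = 2 ^ m := by
      rw [hT]
      simp only [h2, one_pow, one_mul]
      rw [← Nat.cast_sum, Nat.sum_range_choose]
      push_cast
      ring
    rw [hTval, h1, Int.alternating_sum_range_choose]
    by_cases hk0 : k = 0
    · subst hk0
      simp [hm]
    · have hkn : ¬ (k = n ∧ Odd n) := by
        rintro ⟨rfl, hodd⟩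
        exact (Nat.not_even_iff_odd.mpr hodd) hke
      simp [hk0, hkn]
  · -- k odd
    have h1 : ((-1 : ℤ) ^ (k + 1)) = 1 := Even.neg_one_pow (Odd.add_one hko)
    have h2 : ((-1 : ℤ) ^ k) = -1 := Odd.neg_one_pow hko
    have hTval : T = if m = 0 then 1 else 0 := by
      rw [hT]
      simp only [h2]
      exact Int.alternating_sum_range_choose
    have hA : (∑ l ∈ range (k + 1), ((-1 : ℤ) ^ (k + 1)) ^ l * k.choose l) = 2 ^ k := by
      simp only [h1, one_pow, one_mul]
      rw [← Nat.cast_sum, Nat.sum_range_choose]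
      push_cast
      ring
    rw [hTval, hA]
    have hk0 : k ≠ 0 := by
      rintro rfl
      rcases hko with ⟨c, hc⟩
      omega
    by_cases hm0 : m = 0
    · have hkn : k = n := by omega
      subst hkn
      simp [hm0, hk0, hko]
    · have hkn : ¬ (k = n ∧ Odd n) := by
        rintro ⟨rfl, _⟩
        omega
      simp [hm0, hk0, hkn]
end

section
/- Let I be a finite subset of Fin n with |I| = k, and let 0 ≤ m ≤ n. Then in the Clifford algebra Cl = ℝ_{p,q}, the sum of e_J · e_I · e^J over all subsets J of Fin n with |J| = m equals ( ∑_{ℓ=0}^{m} (−1)^{(m−ℓ)·k + ℓ·(k−1)} · C(n−k, m−ℓ) · C(k, ℓ) ) · e_I, where the integer coefficient acts by integer scalar multiplication and C(a,b) is the binomial coefficient (zero when b > a). -/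
/-!
Conjugating `e_I` by one generator gives `e j * e_I * (w j • e j) = (-1) ^ #(I \ {j}) • e_I`:
`e j` anticommutes with every other generator and `w j • e j` is its inverse. Hence
`e_J * e_I * e^J = (-1) ^ (∑ j ∈ J, #(I \ {j})) • e_I`, and the exponent depends only on
`l = #(J ∩ I)`. Grouping the `J` by `l`, there are `C(n - k, m - l) * C(k, l)` of them.
-/

noncomputable section

/-- The weights of the quadratic form of signature `(p, q)`: `1` for the first `p`
coordinates and `-1` for the remaining ones. -/
def cliffordWeight (p : ℕ) {n : ℕ} (i : Fin n) : ℝ := if (i : ℕ) < p then 1 else -1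

/-- The quadratic form of signature `(p, q)` on `Fin (p + q) → ℝ`. -/
def cliffordQ (p q : ℕ) : QuadraticForm ℝ (Fin (p + q) → ℝ) :=
  QuadraticMap.weightedSumSquares ℝ (cliffordWeight p)

/-- The generator `e i` of the Clifford algebra `ℝ_{p,q}`. -/
def cliffordE (p q : ℕ) (i : Fin (p + q)) : CliffordAlgebra (cliffordQ p q) :=
  CliffordAlgebra.ι (cliffordQ p q) (Pi.single i 1)

/-- `e_J`: the product of the generators `e j` for `j ∈ J`, in increasing order. -/
def eLower (p q : ℕ) (J : Finset (Fin (p + q))) : CliffordAlgebra (cliffordQ p q) :=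
  ((J.sort (· ≤ ·)).map (cliffordE p q)).prod

/-- `e^J`: the product of the elements `w j • e j` for `j ∈ J`, in decreasing order. -/
def eUpper (p q : ℕ) (J : Finset (Fin (p + q))) : CliffordAlgebra (cliffordQ p q) :=
  ((J.sort (· ≤ ·)).reverse.map (fun j => cliffordWeight p j • cliffordE p q j)).prod

open Finset

theorem Finset.countP_sort {α : Type*} (r : α → α → Prop) [DecidableRel r] [IsTrans α r]
    [Std.Antisymm r] [Std.Total r] (s : Finset α) (P : α → Prop) [DecidablePred P] :
    (s.sort r).countP P = #{x ∈ s | P x} := by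
  rw [← Multiset.coe_countP, sort_eq, Multiset.countP_eq_card_filter]
  rfl

theorem Finset.sum_map_sort {α M : Type*} [AddCommMonoid M] (r : α → α → Prop) [DecidableRel r]
    [IsTrans α r] [Std.Antisymm r] [Std.Total r] (s : Finset α) (f : α → M) :
    ((s.sort r).map f).sum = ∑ x ∈ s, f x := by
  rw [← Multiset.sum_coe, ← Multiset.map_coe, sort_eq]
  rfl

section Generators
variable {p q : ℕ}

theorem cliffordWeight_mul_self {n : ℕ} (i : Fin n) :
    cliffordWeight p i * cliffordWeight p i = 1 := by
  unfold cliffordWeight; split_ifs <;> norm_num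

theorem cliffordE_mul_self (i : Fin (p + q)) :
    cliffordE p q i * cliffordE p q i = algebraMap ℝ _ (cliffordWeight p i) := by
  rw [cliffordE, CliffordAlgebra.ι_sq_scalar, cliffordQ, QuadraticMap.weightedSumSquares_apply,
    sum_eq_single i (fun j _ hj => by simp [hj]) (by simp)]
  simp

theorem cliffordE_mul_cliffordE_of_ne {i j : Fin (p + q)} (h : i ≠ j) :
    cliffordE p q i * cliffordE p q j = -(cliffordE p q j * cliffordE p q i) := by
  have hpolar : QuadraticMap.polar (cliffordQ p q) (Pi.single i 1) (Pi.single j 1) = 0 := by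
    simp only [QuadraticMap.polar, cliffordQ, QuadraticMap.weightedSumSquares_apply,
      ← sum_sub_distrib]
    refine sum_eq_zero fun x _ => ?_
    rcases eq_or_ne x i with rfl | hx <;> rcases eq_or_ne x j with rfl | hy <;> simp_all
  rw [eq_neg_iff_add_eq_zero, cliffordE, cliffordE, CliffordAlgebra.ι_mul_ι_add_swap, hpolar,
    map_zero]

theorem list_prod_mul_cliffordE (L : List (Fin (p + q))) (j : Fin (p + q)) :
    (L.map (cliffordE p q)).prod * cliffordE p q j =
      ((-1 : ℤ) ^ L.countP (· ≠ j)) • (cliffordE p q j * (L.map (cliffordE p q)).prod) := by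
  induction L with
  | nil => simp
  | cons i L ih =>
    rw [List.map_cons, List.prod_cons, mul_assoc, ih, mul_smul_comm, ← mul_assoc, ← mul_assoc]
    rcases eq_or_ne i j with rfl | hij
    · simp
    · simp [cliffordE_mul_cliffordE_of_ne hij, hij, pow_succ]

theorem cliffordE_mul_list_prod_mul_smul_cliffordE (L : List (Fin (p + q))) (j : Fin (p + q)) :
    cliffordE p q j * (L.map (cliffordE p q)).prod * (cliffordWeight p j • cliffordE p q j) =
      ((-1 : ℤ) ^ L.countP (· ≠ j)) • (L.map (cliffordE p q)).prod := by
  set P := (L.map (cliffordE p q)).prod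
  calc cliffordE p q j * P * (cliffordWeight p j • cliffordE p q j)
      = cliffordWeight p j • (cliffordE p q j * (P * cliffordE p q j)) := by
        rw [mul_smul_comm, mul_assoc]
    _ = (-1 : ℤ) ^ L.countP (· ≠ j) •
          ((cliffordWeight p j • algebraMap ℝ _ (cliffordWeight p j)) * P) := by
        rw [list_prod_mul_cliffordE, mul_smul_comm, smul_comm, ← mul_assoc, cliffordE_mul_self,
          smul_mul_assoc]
    _ = _ := by
        rw [Algebra.smul_def (cliffordWeight p j), ← map_mul, cliffordWeight_mul_self, map_one,
          one_mul]

theorem list_prod_mul_eLower_mul_list_prod (L : List (Fin (p + q))) (I : Finset (Fin (p + q))) :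
    (L.map (cliffordE p q)).prod * eLower p q I *
        (L.reverse.map (fun j => cliffordWeight p j • cliffordE p q j)).prod =
      ((-1 : ℤ) ^ (L.map fun j => #{i ∈ I | i ≠ j}).sum) • eLower p q I := by
  induction L with
  | nil => simp
  | cons j L ih =>
    rw [List.map_cons, List.prod_cons, List.reverse_cons, List.map_append, List.prod_append,
      List.map_singleton, List.prod_singleton]
    calc _ = cliffordE p q j * ((L.map (cliffordE p q)).prod * eLower p q I *
        (L.reverse.map (fun j => cliffordWeight p j • cliffordE p q j)).prod) *
          (cliffordWeight p j • cliffordE p q j) := by simp only [mul_assoc]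
      _ = _ := by
        rw [ih, mul_smul_comm _ (cliffordE p q j) (eLower p q I), smul_mul_assoc, eLower,
          cliffordE_mul_list_prod_mul_smul_cliffordE, countP_sort, smul_smul, ← pow_add,
          List.map_cons, List.sum_cons, Nat.add_comm (List.sum _)]

theorem eLower_mul_eLower_mul_eUpper (I J : Finset (Fin (p + q))) :
    eLower p q J * eLower p q I * eUpper p q J =
      ((-1 : ℤ) ^ ∑ j ∈ J, #{i ∈ I | i ≠ j}) • eLower p q I := by
  rw [eLower, eUpper, list_prod_mul_eLower_mul_list_prod, sum_map_sort]

end Generators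

section Counting
variable {α : Type*} [DecidableEq α]

theorem sum_card_filter_ne (I J : Finset α) :
    ∑ j ∈ J, #{i ∈ I | i ≠ j} = #(J \ I) * #I + #(J ∩ I) * (#I - 1) := by
  have h_out : ∀ j ∈ J \ I, #{i ∈ I | i ≠ j} = #I := fun j hj => by
    rw [filter_ne', erase_eq_of_notMem (mem_sdiff.1 hj).2]
  have h_in : ∀ j ∈ J ∩ I, #{i ∈ I | i ≠ j} = #I - 1 := fun j hj => by
    rw [filter_ne', card_erase_of_mem (mem_inter.1 hj).2]
  rw [← sum_sdiff (inter_subset_left : J ∩ I ⊆ J), sdiff_inter_self_left, sum_congr rfl h_out,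
    sum_congr rfl h_in, sum_const, sum_const, smul_eq_mul, smul_eq_mul]

variable [Fintype α]

theorem card_filter_powersetCard_card_inter (I : Finset α) {l m : ℕ} (hl : l ≤ m) :
    #{J ∈ powersetCard m univ | #(J ∩ I) = l} =
      (Fintype.card α - #I).choose (m - l) * (#I).choose l := by
  have h_split : ∀ A ⊆ Iᶜ, ∀ B ⊆ I, (A ∪ B) \ I = A ∧ (A ∪ B) ∩ I = B := fun A hA B hB => by
    have hAI : Disjoint A I := subset_compl_iff_disjoint_right.1 hA
    rw [union_sdiff_distrib, hAI.sdiff_eq_left, sdiff_eq_empty_iff_subset.2 hB, union_empty,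
      union_inter_distrib_right, disjoint_iff_inter_eq_empty.1 hAI, empty_union, inter_eq_left.2 hB]
    exact ⟨rfl, rfl⟩
  rw [← card_compl, ← card_powersetCard, ← card_powersetCard, ← card_product]
  refine card_nbij' (fun J => (J \ I, J ∩ I)) (fun P => P.1 ∪ P.2) ?_ ?_ ?_ ?_
  · intro J hJ
    simp only [mem_coe, mem_filter, mem_powersetCard, subset_univ, true_and, coe_product,
      Set.mem_prod] at hJ ⊢
    have := card_sdiff_add_card_inter J I
    exact ⟨⟨fun x hx => mem_compl.2 (mem_sdiff.1 hx).2, by omega⟩, inter_subset_right, hJ.2⟩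
  · rintro ⟨A, B⟩ hAB
    simp only [coe_product, Set.mem_prod, mem_coe, mem_powersetCard] at hAB
    obtain ⟨⟨hA, hAc⟩, hB, hBc⟩ := hAB
    have hAB : Disjoint A B :=
      disjoint_of_subset_left hA (disjoint_of_subset_right hB disjoint_compl_left)
    simp only [mem_coe, mem_filter, mem_powersetCard, subset_univ, true_and,
      card_union_of_disjoint hAB, (h_split A hA B hB).2, hAc, hBc, and_true]
    omega
  · intro J _
    exact sdiff_union_inter J I
  · rintro ⟨A, B⟩ hAB
    simp only [coe_product, Set.mem_prod, mem_coe, mem_powersetCard] at hAB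
    obtain ⟨h_sdiff, h_inter⟩ := h_split A hAB.1.1 B hAB.2.1
    exact Prod.ext h_sdiff h_inter

theorem sum_powersetCard_univ_card_inter {M : Type*} [AddCommMonoid M] (I : Finset α) (m : ℕ)
    (f : ℕ → M) :
    ∑ J ∈ powersetCard m univ, f #(J ∩ I) =
      ∑ l ∈ range (m + 1), ((Fintype.card α - #I).choose (m - l) * (#I).choose l) • f l := by
  have hmaps : ∀ J ∈ powersetCard m (univ : Finset α), #(J ∩ I) ∈ range (m + 1) := fun J hJ =>
    mem_range_succ_iff.2 ((card_le_card inter_subset_left).trans (mem_powersetCard.1 hJ).2.le)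
  rw [← sum_fiberwise_of_maps_to hmaps]
  refine sum_congr rfl fun l hl => ?_
  rw [← card_filter_powersetCard_card_inter I (mem_range_succ_iff.1 hl), ← sum_const]
  exact sum_congr rfl fun J hJ => by rw [(mem_filter.1 hJ).2]

end Counting

theorem sum_eLower_mul_eUpper_card_general (p q k m : ℕ)
    (I : Finset (Fin (p + q))) (hI : I.card = k) :
    ∑ J ∈ Finset.powersetCard m (Finset.univ : Finset (Fin (p + q))),
        eLower p q J * eLower p q I * eUpper p q J =
      (∑ l ∈ Finset.range (m + 1),
          (-1 : ℤ) ^ ((m - l) * k + l * (k - 1)) * (p + q - k).choose (m - l) * k.choose l) •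
        eLower p q I := by
  subst hI
  have hsign : ∀ J ∈ powersetCard m univ, ∑ j ∈ J, #{i ∈ I | i ≠ j} =
      (m - #(J ∩ I)) * #I + #(J ∩ I) * (#I - 1) := fun J hJ => by
    rw [sum_card_filter_ne, card_sdiff, inter_comm, (mem_powersetCard.1 hJ).2]
  calc _ = (∑ J ∈ powersetCard m univ, (-1 : ℤ) ^ ∑ j ∈ J, #{i ∈ I | i ≠ j}) • eLower p q I := by
        simp only [eLower_mul_eLower_mul_eUpper, sum_smul]
    _ = _ := by
        rw [sum_congr rfl fun J hJ => by rw [hsign J hJ], sum_powersetCard_univ_card_inter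
          I m fun l => (-1 : ℤ) ^ ((m - l) * #I + l * (#I - 1)), Fintype.card_fin]
        refine congrArg (· • eLower p q I) (sum_congr rfl fun l _ => ?_)
        rw [nsmul_eq_mul]
        push_cast
        ring

theorem sum_eLower_mul_eUpper_card (p q k m : ℕ) (hm : m ≤ p + q)
    (I : Finset (Fin (p + q))) (hI : I.card = k) :
    ∑ J ∈ Finset.powersetCard m (Finset.univ : Finset (Fin (p + q))),
        eLower p q J * eLower p q I * eUpper p q J =
      (∑ l ∈ Finset.range (m + 1),
          (-1 : ℤ) ^ ((m - l) * k + l * (k - 1)) * (p + q - k).choose (m - l) * k.choose l) •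
        eLower p q I :=
  sum_eLower_mul_eUpper_card_general p q k m I hI
end
end

section
/- (Quaternionic Stone–Weierstrass.) Let Y be a compact Hausdorff topological space and let A be an ℝ-subalgebra of the algebra C(Y, ℍ) of continuous quaternion-valued functions on Y such that A contains every constant function (with arbitrary quaternion value) and A separates the points of Y (for all x ≠ y in Y there exists f ∈ A with f x ≠ f y). Then A is dense in C(Y, ℍ) for the topology of uniform convergence (equivalently, the topological closure of A is all of C(Y, ℍ)). -/
/-!
For `q : ℍ` we have `re q = (q - i q i - j q j - k q k) / 4`, so an `ℝ`-subalgebra `A` containing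
the constants contains `t ↦ (g t).re` together with every `g ∈ A`. A quaternion is determined by
the real parts of its left multiples by `1, i, j, k`, so the real-valued functions in `A` separate
points as soon as `A` does, and by the real Stone–Weierstrass theorem they are dense in `C(Y, ℝ)`.
The closure of `A` thus contains all real-valued functions and all constants, hence every
`g = ∑ n, (coordinate n of g) * e n` for a basis `e` of `ℍ` over `ℝ`.
-/

open scoped Quaternion

namespace ContinuousMap

variable {Y E : Type*} [TopologicalSpace Y] [TopologicalSpace E]

section Semiring

variable [Semiring E] [Algebra ℝ E] [IsTopologicalSemiring E] [ContinuousSMul ℝ E]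

variable (Y E) in
noncomputable def ofRealAlgHom : C(Y, ℝ) →ₐ[ℝ] C(Y, E) :=
  (Algebra.ofId ℝ E).compLeftContinuous ℝ (continuous_algebraMap ℝ E)

@[simp]
theorem ofRealAlgHom_apply (h : C(Y, ℝ)) (t : Y) : ofRealAlgHom Y E h t = algebraMap ℝ E (h t) :=
  rfl

theorem continuous_ofRealAlgHom : Continuous (ofRealAlgHom Y E) :=
  continuous_postcomp ⟨_, continuous_algebraMap ℝ E⟩

theorem ofRealAlgHom_mem_closure [CompactSpace Y] {A : Subalgebra ℝ C(Y, E)}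
    (hA : (A.comap (ofRealAlgHom Y E)).SeparatesPoints) (h : C(Y, ℝ)) :
    ofRealAlgHom Y E h ∈ closure (A : Set C(Y, E)) := by
  have hdense : h ∈ closure (A.comap (ofRealAlgHom Y E) : Set C(Y, ℝ)) := by
    rw [← Subalgebra.topologicalClosure_coe,
      subalgebra_topologicalClosure_eq_top_of_separatesPoints _ hA]
    trivial
  exact map_mem_closure continuous_ofRealAlgHom hdense fun _ hb => hb

end Semiring

theorem subalgebra_eq_top_of_ofRealAlgHom_mem_of_const_mem [Ring E] [IsTopologicalRing E]
    [T2Space E] [Algebra ℝ E] [ContinuousSMul ℝ E] [FiniteDimensional ℝ E]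
    (S : Subalgebra ℝ C(Y, E)) (hreal : ∀ h, ofRealAlgHom Y E h ∈ S)
    (hconst : ∀ c, const Y c ∈ S) : S = ⊤ := by
  let b := Module.finBasis ℝ E
  let coord (g : C(Y, E)) (n : Fin (Module.finrank ℝ E)) : C(Y, ℝ) :=
    ⟨fun t => b.coord n (g t), (b.coord n).continuous_of_finiteDimensional.comp g.continuous⟩
  refine eq_top_iff.2 fun g _ => ?_
  have hg : g = ∑ n, ofRealAlgHom Y E (coord g n) * const Y (b n) := by
    ext t
    simpa [coord, Algebra.smul_def] using (b.sum_repr (g t)).symm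
  rw [hg]
  exact sum_mem fun n _ => mul_mem (hreal _) (hconst _)

end ContinuousMap

namespace Quaternion

def unitI : ℍ[ℝ] := ⟨0, 1, 0, 0⟩
def unitJ : ℍ[ℝ] := ⟨0, 0, 1, 0⟩
def unitK : ℍ[ℝ] := ⟨0, 0, 0, 1⟩

def reCM : C(ℍ[ℝ], ℝ) := ⟨fun q => q.re, continuous_re⟩

theorem coe_re_eq_smul (q : ℍ[ℝ]) : (q.re : ℍ[ℝ]) =
    (4⁻¹ : ℝ) • (q - unitI * q * unitI - unitJ * q * unitJ - unitK * q * unitK) := by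
  ext <;> simp only [re_mul, imI_mul, imJ_mul, imK_mul, re_sub, imI_sub, imJ_sub, imK_sub,
    re_smul, imI_smul, imJ_smul, imK_smul] <;> simp [unitI, unitJ, unitK]
  ring

theorem eq_of_forall_re_mul_eq {p q : ℍ[ℝ]} (h : ∀ c : ℍ[ℝ], (c * p).re = (c * q).re) :
    p = q := by
  have h1 := h 1
  have hi := h unitI
  have hj := h unitJ
  have hk := h unitK
  simp only [re_mul] at h1 hi hj hk
  ext <;> simp [unitI, unitJ, unitK] at h1 hi hj hk <;> linarith

end Quaternion

namespace Subalgebra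

open ContinuousMap Quaternion

variable {Y : Type*} [TopologicalSpace Y] {A : Subalgebra ℝ C(Y, ℍ[ℝ])}

theorem ofRealAlgHom_reCM_comp_mem (hconst : ∀ c : ℍ[ℝ], const Y c ∈ A)
    {g : C(Y, ℍ[ℝ])} (hg : g ∈ A) : ofRealAlgHom Y ℍ[ℝ] (reCM.comp g) ∈ A := by
  have hconj (c : ℍ[ℝ]) : const Y c * g * const Y c ∈ A :=
    A.mul_mem (A.mul_mem (hconst c) hg) (hconst c)
  have hre : ofRealAlgHom Y ℍ[ℝ] (reCM.comp g) = (4⁻¹ : ℝ) • (g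
      - const Y unitI * g * const Y unitI
      - const Y unitJ * g * const Y unitJ
      - const Y unitK * g * const Y unitK) :=
    ContinuousMap.ext fun t => coe_re_eq_smul (g t)
  rw [hre]
  exact A.smul_mem (sub_mem (sub_mem (sub_mem hg (hconj _)) (hconj _)) (hconj _)) _

theorem separatesPoints_comap_ofRealAlgHom (hconst : ∀ c : ℍ[ℝ], const Y c ∈ A)
    (hsep : ∀ x y : Y, x ≠ y → ∃ f ∈ A, f x ≠ f y) :
    (A.comap (ofRealAlgHom Y ℍ[ℝ])).SeparatesPoints := by
  intro x y hxy
  obtain ⟨f, hfA, hfxy⟩ := hsep x y hxy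
  obtain ⟨c, hc⟩ : ∃ c : ℍ[ℝ], (c * f x).re ≠ (c * f y).re := by
    by_contra! h
    exact hfxy (eq_of_forall_re_mul_eq h)
  exact ⟨_, ⟨_, A.ofRealAlgHom_reCM_comp_mem hconst (A.mul_mem (hconst c) hfA), rfl⟩, hc⟩

end Subalgebra

theorem stoneWeierstrass_quaternion_general
    (Y : Type) [TopologicalSpace Y] [CompactSpace Y]
    (A : Subalgebra ℝ C(Y, ℍ[ℝ]))
    (hconst : ∀ c : ℍ[ℝ], ContinuousMap.const Y c ∈ A)
    (hsep : ∀ x y : Y, x ≠ y → ∃ f ∈ A, f x ≠ f y) :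
    closure (A : Set C(Y, ℍ[ℝ])) = Set.univ := by
  have hreal := ContinuousMap.ofRealAlgHom_mem_closure
    (A.separatesPoints_comap_ofRealAlgHom hconst hsep)
  have htop : A.topologicalClosure = ⊤ :=
    ContinuousMap.subalgebra_eq_top_of_ofRealAlgHom_mem_of_const_mem _ hreal
      fun c => A.le_topologicalClosure (hconst c)
  rw [← Subalgebra.topologicalClosure_coe, htop, Algebra.coe_top]

open scoped Quaternion in
theorem stoneWeierstrass_quaternion
    (Y : Type) [TopologicalSpace Y] [CompactSpace Y] [T2Space Y]
    (A : Subalgebra ℝ C(Y, ℍ[ℝ]))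
    (hconst : ∀ c : ℍ[ℝ], ContinuousMap.const Y c ∈ A)
    (hsep : ∀ x y : Y, x ≠ y → ∃ f ∈ A, f x ≠ f y) :
    closure (A : Set C(Y, ℍ[ℝ])) = Set.univ :=
  stoneWeierstrass_quaternion_general Y A hconst hsep
end

section
/- (Matrix-valued Stone–Weierstrass.) Let Y be a compact Hausdorff topological space and let A be an ℝ-subalgebra of the algebra C(Y, M₂(ℝ)) of continuous functions from Y to the algebra of real 2×2 matrices such that A contains every constant function (with arbitrary matrix value) and A separates the points of Y (for all x ≠ y in Y there exists f ∈ A with f x ≠ f y). Then A is dense in C(Y, M₂(ℝ)) for the topology of uniform convergence (equivalently, the topological closure of A is all of C(Y, M₂(ℝ))). -/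
open Matrix

lemma sw_sandwich (k i j l : Fin 2) (M : Matrix (Fin 2) (Fin 2) ℝ) :
    Matrix.single k i (1:ℝ) * M * Matrix.single j l 1 =
      Matrix.single k l (M i j) := by
  ext a b
  rcases eq_or_ne a k with rfl | ha <;> rcases eq_or_ne b l with rfl | hb
  · simp
  · simp [hb, Ne.symm hb]
  · simp [ha, Ne.symm ha]
  · simp [ha, hb, Ne.symm ha, Ne.symm hb]

noncomputable def swEntry (Y : Type) [TopologicalSpace Y] (i j : Fin 2)
    (f : C(Y, Matrix (Fin 2) (Fin 2) ℝ)) : C(Y, ℝ) :=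
  ⟨fun y => f y i j, (continuous_apply j).comp ((continuous_apply i).comp f.continuous)⟩

noncomputable def swEmb (Y : Type) [TopologicalSpace Y] (k l : Fin 2) :
    C(Y, ℝ) → C(Y, Matrix (Fin 2) (Fin 2) ℝ) := fun g =>
  (⟨fun r => Matrix.single k l r, by
    have h : (fun r : ℝ => Matrix.single k l r)
        = fun r : ℝ => r • Matrix.single k l (1:ℝ) := by
      funext r; rw [Matrix.smul_single]; simp
    rw [h]; exact continuous_id.smul continuous_const⟩ : C(ℝ, Matrix (Fin 2) (Fin 2) ℝ)).comp g

lemma swEmb_apply (Y : Type) [TopologicalSpace Y] (k l : Fin 2) (g : C(Y, ℝ)) (y : Y) :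
    swEmb Y k l g y = Matrix.single k l (g y) := rfl

lemma swEmb_continuous (Y : Type) [TopologicalSpace Y] (k l : Fin 2) :
    Continuous (swEmb Y k l) := ContinuousMap.continuous_postcomp _

theorem stoneWeierstrass_matrix
    (Y : Type) [TopologicalSpace Y] [CompactSpace Y] [T2Space Y]
    (A : Subalgebra ℝ C(Y, Matrix (Fin 2) (Fin 2) ℝ))
    (hconst : ∀ c : Matrix (Fin 2) (Fin 2) ℝ, ContinuousMap.const Y c ∈ A)
    (hsep : ∀ x y : Y, x ≠ y → ∃ f ∈ A, f x ≠ f y) :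
    closure (A : Set C(Y, Matrix (Fin 2) (Fin 2) ℝ)) = Set.univ := by
  -- the scalar subalgebra
  have hconst' : ∀ (k l : Fin 2) (r : ℝ),
      swEmb Y k l (ContinuousMap.const Y r) ∈ A := by
    intro k l r
    have : swEmb Y k l (ContinuousMap.const Y r)
        = ContinuousMap.const Y (Matrix.single k l r) := by
      ext y; rfl
    rw [this]; exact hconst _
  let B : Subalgebra ℝ C(Y, ℝ) :=
    { carrier := {g | ∀ k l : Fin 2, swEmb Y k l g ∈ A}
      add_mem' := by
        intro g h hg hh k l
        have : swEmb Y k l (g + h) = swEmb Y k l g + swEmb Y k l h := by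
          ext y i j : 2
          simp [swEmb_apply, Matrix.single, ite_add_zero]
        rw [this]; exact add_mem (hg k l) (hh k l)
      mul_mem' := by
        intro g h hg hh k l
        have : swEmb Y k l (g * h) = swEmb Y k 0 g * swEmb Y 0 l h := by
          ext y : 1
          simp [swEmb_apply, Matrix.single_mul_single_same]
        rw [this]; exact mul_mem (hg k 0) (hh 0 l)
      algebraMap_mem' := fun r => fun k l => hconst' k l r }
  have hBsep : B.SeparatesPoints := by
    intro x y hxy
    obtain ⟨f, hfA, hfxy⟩ := hsep x y hxy
    have : ∃ i j : Fin 2, f x i j ≠ f y i j := by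
      by_contra hc
      push_neg at hc
      exact hfxy (by ext i j; exact hc i j)
    obtain ⟨i, j, hij⟩ := this
    refine ⟨_, ⟨swEntry Y i j f, ?_, rfl⟩, hij⟩
    intro k l
    have : swEmb Y k l (swEntry Y i j f)
        = ContinuousMap.const Y (Matrix.single k i 1) * f *
          ContinuousMap.const Y (Matrix.single j l 1) := by
      ext y : 1
      simp [swEmb_apply, swEntry, sw_sandwich]
    rw [this]
    exact mul_mem (mul_mem (hconst _) hfA) (hconst _)
  have hB : B.topologicalClosure = ⊤ :=
    ContinuousMap.subalgebra_topologicalClosure_eq_top_of_separatesPoints B hBsep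
  -- now approximate
  apply Set.eq_univ_of_forall
  intro F
  have hFmem : ∀ k l : Fin 2, swEmb Y k l (swEntry Y k l F)
      ∈ A.topologicalClosure := by
    intro k l
    have hgB : swEntry Y k l F ∈ closure (B : Set C(Y, ℝ)) := by
      have : swEntry Y k l F ∈ B.topologicalClosure := by rw [hB]; trivial
      exact this
    exact map_mem_closure (swEmb_continuous Y k l) hgB (fun u hu => hu k l)
  have : F = ∑ k : Fin 2, ∑ l : Fin 2, swEmb Y k l (swEntry Y k l F) := by
    ext y : 1
    rw [Matrix.matrix_eq_sum_single (F y)]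
    simp [swEmb_apply, swEntry]
  rw [this]
  exact sum_mem fun k _ => sum_mem fun l _ => hFmem k l
end
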